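/- For all nonnegative integers m₁, m₂, with p = (m₁+m₂+1)/2, and all real b with b ≠ 0 and b ≠ -1: ∑_{k=0}^{m₁} ∑_{l=0}^{m₁-k} binom(m₂+l, m₂) * (-1)^k * binom(p, k) * (1-b)^k * (1+b)^{-l} = b^{m₁} * ∑_{k=0}^{m₁} ∑_{l=0}^{m₁-k} binom(m₂+l, m₂) * binom(p, k) * (1-b)^k * (1+b)^{-l} * b^{l-k}. -/

import Mathlib

/-!
Both sides are coefficients of `X ^ m₁` in products of binomial series `(1 + a X) ^ x`: with
`c = 1 - b`, the left side in `(1 - c X) ^ p (1 - X / (1 + b)) ^ (-m₂ - 1) (1 - X) ^ (-1)` and the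
right side in `(1 + c X) ^ p (1 - b² X / (1 + b)) ^ (-m₂ - 1) (1 - b X) ^ (-1)`.
The substitution `X ↦ X / (1 + c X)` preserves coefficients in the Lagrange-inversion form
`[X ^ n] F = [X ^ n] F (X / (1 + c X)) (1 + c X) ^ (n - 1)`, and it sends `(1 + a X) ^ x` to
`(1 + (a + c) X) ^ x (1 + c X) ^ (-x)`. Applied to the first product with `n = m₁` it yields the
second one: the powers of `1 + c X` combine to the exponent `-p + (m₂ + 1) + 1 + (m₁ - 1) = p`,
because `2 p = m₁ + m₂ + 1`.
-/

/-- Generalized binomial coefficient `x(x-1)⋯(x-k+1)/k!` with real upper argument. -/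
noncomputable def gchoose (x : ℝ) (k : ℕ) : ℝ :=
  (∏ i ∈ Finset.range k, (x - i)) / (Nat.factorial k)

open PowerSeries Finset

lemma gchoose_eq_choose (x : ℝ) (k : ℕ) : gchoose x k = Ring.choose x k := by
  rw [Ring.choose_eq_smul, gchoose, ← descPochhammer_eval_eq_prod_range,
    ← Polynomial.aeval_eq_smeval, ← descPochhammer_map (algebraMap ℤ ℝ), Polynomial.aeval_def,
    Polynomial.eval_map, smul_eq_mul, div_eq_inv_mul]

lemma coeff_mul_mul {R : Type*} [CommSemiring R] (F G H : R⟦X⟧) (n : ℕ) :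
    coeff n (F * G * H) = ∑ k ∈ range (n + 1), ∑ l ∈ range (n - k + 1),
      coeff k F * coeff l G * coeff (n - k - l) H := by
  rw [mul_assoc, coeff_mul, Nat.sum_antidiagonal_eq_sum_range_succ_mk]
  refine sum_congr rfl fun k _ => ?_
  rw [coeff_mul, Nat.sum_antidiagonal_eq_sum_range_succ_mk, mul_sum]
  simp only [mul_assoc]

lemma coeff_subst_mul {R : Type*} [CommRing R] {ψ : R⟦X⟧} (hψ : constantCoeff ψ = 0)
    (F E : R⟦X⟧) (n : ℕ) :
    coeff n (subst ψ F * E) = ∑ i ∈ range (n + 1), coeff i F * coeff n (ψ ^ i * E) := by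
  have hs : HasSubst ψ := HasSubst.of_constantCoeff_zero' hψ
  have htail : coeff n (ψ ^ (n + 1) * subst ψ (mk fun i ↦ coeff (i + (n + 1)) F) * E) = 0 := by
    refine X_pow_dvd_iff.mp ?_ n (lt_add_one n)
    rw [mul_assoc]
    exact (pow_dvd_pow_of_dvd (X_dvd_iff.mpr hψ) _).mul_right _
  conv_lhs => rw [eq_X_pow_mul_shift_add_trunc (n + 1) F]
  rw [subst_add hs, subst_mul hs, subst_pow hs, subst_X hs, subst_coe hs, add_mul, map_add, htail,
    zero_add, Polynomial.aeval_def, eval₂_trunc_eq_sum_range, sum_mul, map_sum]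
  refine sum_congr rfl fun i _ => ?_
  rw [mul_assoc, ← Algebra.smul_def]
  exact coeff_smul _ _ _

section BinomialSeries

variable {R : Type*} [CommRing R] [BinomialRing R]

/-- The power series `(1 + a X) ^ x`. -/
noncomputable def scaledBinomialSeries (a x : R) : R⟦X⟧ := rescale a (binomialSeries R x)

@[simp]
lemma coeff_scaledBinomialSeries (a x : R) (n : ℕ) :
    coeff n (scaledBinomialSeries a x) = Ring.choose x n * a ^ n := by
  simp [scaledBinomialSeries, coeff_rescale, mul_comm]

lemma scaledBinomialSeries_add (a x y : R) :
    scaledBinomialSeries a (x + y) = scaledBinomialSeries a x * scaledBinomialSeries a y := by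
  simp [scaledBinomialSeries]

@[simp]
lemma scaledBinomialSeries_zero_left (x : R) : scaledBinomialSeries 0 x = 1 := by
  simp [scaledBinomialSeries]

@[simp]
lemma scaledBinomialSeries_zero_right (a : R) : scaledBinomialSeries a 0 = 1 := by
  simp [scaledBinomialSeries]

lemma Ring.choose_neg_natCast_sub_one (m l : ℕ) :
    Ring.choose (-(m : R) - 1) l = (-1) ^ l * (m + l).choose m := by
  rw [← neg_add', Ring.choose_neg, show (m : R) + 1 + l - 1 = ((m + l : ℕ) : R) by push_cast; ring,
    Ring.choose_natCast, Nat.choose_symm_add, Units.smul_def, zsmul_eq_mul,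
    Int.cast_negOnePow_natCast]

lemma coeff_scaledBinomialSeries_neg_natCast_sub_one (a : R) (m l : ℕ) :
    coeff l (scaledBinomialSeries a (-(m : R) - 1)) = (m + l).choose m * (-a) ^ l := by
  rw [coeff_scaledBinomialSeries, Ring.choose_neg_natCast_sub_one, neg_pow a]
  ring

lemma coeff_scaledBinomialSeries_neg_one (a : R) (n : ℕ) :
    coeff n (scaledBinomialSeries a (-1)) = (-a) ^ n := by
  simpa using coeff_scaledBinomialSeries_neg_natCast_sub_one a 0 n

noncomputable def xDivOneAddMulX (c : R) : R⟦X⟧ := X * scaledBinomialSeries c (-1)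

lemma constantCoeff_xDivOneAddMulX (c : R) : constantCoeff (xDivOneAddMulX c) = 0 := by
  simp [xDivOneAddMulX]

lemma hasSubst_xDivOneAddMulX (c : R) : HasSubst (xDivOneAddMulX c) :=
  HasSubst.of_constantCoeff_zero' (constantCoeff_xDivOneAddMulX c)

lemma xDivOneAddMulX_pow_mul (c x : R) (i : ℕ) :
    xDivOneAddMulX c ^ i * scaledBinomialSeries c x = X ^ i * scaledBinomialSeries c (x - i) := by
  induction i with
  | zero => simp
  | succ i ih =>
    rw [pow_succ, mul_right_comm, ih, xDivOneAddMulX, mul_mul_mul_comm, ← pow_succ,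
      ← scaledBinomialSeries_add]
    congr 2
    push_cast
    ring

lemma coeff_xDivOneAddMulX_pow_mul (c x : R) (i n : ℕ) :
    coeff n (xDivOneAddMulX c ^ i * scaledBinomialSeries c x) =
      if i ≤ n then Ring.choose (x - i) (n - i) * c ^ (n - i) else 0 := by
  rw [xDivOneAddMulX_pow_mul, coeff_X_pow_mul', coeff_scaledBinomialSeries]

lemma coeff_subst_xDivOneAddMulX_mul (c : R) (F : R⟦X⟧) (n : ℕ) :
    coeff n (subst (xDivOneAddMulX c) F * scaledBinomialSeries c ((n : R) - 1)) = coeff n F := by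
  rw [coeff_subst_mul (constantCoeff_xDivOneAddMulX c),
    sum_eq_single_of_mem n (self_mem_range_succ n)]
  · simp [coeff_xDivOneAddMulX_pow_mul]
  · intro i hi hin
    have hlt : i < n := lt_of_le_of_ne (Nat.lt_succ_iff.mp (mem_range.mp hi)) hin
    -- for `i < n` the factor `(1 + c X) ^ (n - 1 - i)` is a polynomial of degree `n - 1 - i < n - i`
    have hcast : (n : R) - 1 - i = ((n - 1 - i : ℕ) : R) := by
      rw [Nat.cast_sub (by omega), Nat.cast_sub (by omega)]
      simp
    rw [coeff_xDivOneAddMulX_pow_mul, if_pos hlt.le, hcast, Ring.choose_natCast,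
      Nat.choose_eq_zero_of_lt (by omega)]
    simp

lemma subst_xDivOneAddMulX_scaledBinomialSeries (a c x : R) :
    subst (xDivOneAddMulX c) (scaledBinomialSeries a x) =
      scaledBinomialSeries (a + c) x * scaledBinomialSeries c (-x) := by
  suffices h : subst (xDivOneAddMulX c) (scaledBinomialSeries a x) * scaledBinomialSeries c x =
      scaledBinomialSeries (a + c) x by
    rw [← h, mul_assoc, ← scaledBinomialSeries_add, add_neg_cancel,
      scaledBinomialSeries_zero_right, mul_one]
  ext n
  rw [coeff_subst_mul (constantCoeff_xDivOneAddMulX c), coeff_scaledBinomialSeries, add_pow,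
    mul_sum]
  refine sum_congr rfl fun i hi => ?_
  have hin : i ≤ n := Nat.lt_succ_iff.mp (mem_range.mp hi)
  have hchoose := Ring.choose_smul_choose x hin
  rw [nsmul_eq_mul] at hchoose
  rw [coeff_xDivOneAddMulX_pow_mul, if_pos hin, coeff_scaledBinomialSeries]
  linear_combination (a ^ i * c ^ (n - i)) * hchoose.symm

end BinomialSeries

lemma sum_choose_mul_gchoose_eq_coeff (m₁ m₂ : ℕ) (p b : ℝ) :
    ∑ k ∈ range (m₁ + 1), ∑ l ∈ range (m₁ - k + 1),
        ((m₂ + l).choose m₂ : ℝ) * (-1) ^ k * gchoose p k * (1 - b) ^ k * (1 + b) ^ (-(l : ℤ)) =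
      coeff m₁ (scaledBinomialSeries (-(1 - b)) p
        * scaledBinomialSeries (-(1 + b)⁻¹) (-(m₂ : ℝ) - 1) * scaledBinomialSeries (-1) (-1)) := by
  rw [coeff_mul_mul]
  refine sum_congr rfl fun k _ => sum_congr rfl fun l _ => ?_
  rw [coeff_scaledBinomialSeries, coeff_scaledBinomialSeries_neg_natCast_sub_one,
    coeff_scaledBinomialSeries_neg_one, gchoose_eq_choose, zpow_neg, zpow_natCast, neg_neg,
    neg_neg, one_pow, inv_pow, neg_pow (1 - b)]
  ring

lemma pow_mul_sum_choose_mul_gchoose_eq_coeff (m₁ m₂ : ℕ) (p : ℝ) {b : ℝ} (hb : b ≠ 0) :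
    b ^ m₁ * ∑ k ∈ range (m₁ + 1), ∑ l ∈ range (m₁ - k + 1),
        ((m₂ + l).choose m₂ : ℝ) * gchoose p k * (1 - b) ^ k * (1 + b) ^ (-(l : ℤ))
          * b ^ ((l : ℤ) - (k : ℤ)) =
      coeff m₁ (scaledBinomialSeries (1 - b) p
        * scaledBinomialSeries (-(b ^ 2 * (1 + b)⁻¹)) (-(m₂ : ℝ) - 1)
        * scaledBinomialSeries (-b) (-1)) := by
  rw [coeff_mul_mul, mul_sum]
  refine sum_congr rfl fun k hk => ?_
  rw [mul_sum]
  refine sum_congr rfl fun l hl => ?_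
  have hkl : k + l ≤ m₁ := by
    have := mem_range.mp hk
    have := mem_range.mp hl
    omega
  have hpow : b ^ m₁ * b ^ ((l : ℤ) - k) = (b ^ 2) ^ l * b ^ (m₁ - k - l) := by
    rw [← pow_mul, ← pow_add, ← zpow_natCast, ← zpow_natCast, ← zpow_add₀ hb]
    congr 1
    push_cast [Nat.sub_sub, Nat.cast_sub hkl]
    ring
  rw [coeff_scaledBinomialSeries, coeff_scaledBinomialSeries_neg_natCast_sub_one,
    coeff_scaledBinomialSeries_neg_one, gchoose_eq_choose, zpow_neg, zpow_natCast, neg_neg,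
    neg_neg, mul_pow, inv_pow]
  linear_combination ((m₂ + l).choose m₂ * Ring.choose p k * (1 - b) ^ k * ((1 + b) ^ l)⁻¹) * hpow

lemma subst_xDivOneAddMulX_mul_eq (m₁ m₂ : ℕ) {p b : ℝ} (hp : 2 * p = m₁ + m₂ + 1)
    (hb : 1 + b ≠ 0) :
    subst (xDivOneAddMulX (1 - b)) (scaledBinomialSeries (-(1 - b)) p
        * scaledBinomialSeries (-(1 + b)⁻¹) (-(m₂ : ℝ) - 1) * scaledBinomialSeries (-1) (-1))
        * scaledBinomialSeries (1 - b) ((m₁ : ℝ) - 1) =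
      scaledBinomialSeries (1 - b) p
        * scaledBinomialSeries (-(b ^ 2 * (1 + b)⁻¹)) (-(m₂ : ℝ) - 1)
        * scaledBinomialSeries (-b) (-1) := by
  have hscale : -(1 + b)⁻¹ + (1 - b) = -(b ^ 2 * (1 + b)⁻¹) := by
    field_simp
    ring
  have hexponent : scaledBinomialSeries (1 - b) (-p) * scaledBinomialSeries (1 - b) ((m₂ : ℝ) + 1)
      * scaledBinomialSeries (1 - b) 1 * scaledBinomialSeries (1 - b) ((m₁ : ℝ) - 1)
      = scaledBinomialSeries (1 - b) p := by
    simp only [← scaledBinomialSeries_add]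
    congr 1
    linarith
  rw [subst_mul (hasSubst_xDivOneAddMulX _), subst_mul (hasSubst_xDivOneAddMulX _),
    subst_xDivOneAddMulX_scaledBinomialSeries, subst_xDivOneAddMulX_scaledBinomialSeries,
    subst_xDivOneAddMulX_scaledBinomialSeries, neg_add_cancel, scaledBinomialSeries_zero_left,
    one_mul, hscale, show (-1 : ℝ) + (1 - b) = -b by ring, neg_sub', neg_neg, sub_neg_eq_add,
    neg_neg (1 : ℝ)]
  linear_combination (scaledBinomialSeries (-(b ^ 2 * (1 + b)⁻¹)) (-(m₂ : ℝ) - 1)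
    * scaledBinomialSeries (-b) (-1)) * hexponent

theorem stmt2 (m₁ m₂ : ℕ) (b : ℝ) (hb0 : b ≠ 0) (hb1 : b ≠ -1) :
    ∑ k ∈ Finset.range (m₁ + 1), ∑ l ∈ Finset.range (m₁ - k + 1),
        ((m₂ + l).choose m₂ : ℝ) * (-1) ^ k * gchoose ((m₁ + m₂ + 1 : ℝ) / 2) k
          * (1 - b) ^ k * (1 + b) ^ (-(l : ℤ))
      = b ^ m₁ * ∑ k ∈ Finset.range (m₁ + 1), ∑ l ∈ Finset.range (m₁ - k + 1),
          ((m₂ + l).choose m₂ : ℝ) * gchoose ((m₁ + m₂ + 1 : ℝ) / 2) k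
            * (1 - b) ^ k * (1 + b) ^ (-(l : ℤ)) * b ^ ((l : ℤ) - (k : ℤ)) := by
  have hb : 1 + b ≠ 0 := fun h => hb1 (by linarith)
  rw [sum_choose_mul_gchoose_eq_coeff, pow_mul_sum_choose_mul_gchoose_eq_coeff _ _ _ hb0,
    ← subst_xDivOneAddMulX_mul_eq m₁ m₂ (by ring) hb, coeff_subst_xDivOneAddMulX_mul]
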